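/- Let f : ℤ → F be any function and let R : A_ω → A_ω be the F-linear map determined by R(L_m) = f(m)·L_m for all m ∈ ℤ. Then R is a Rota–Baxter operator of weight 1 on A_ω if and only if f satisfies the homogeneous Rota–Baxter equations (odd) and (even). -/

import Mathlib

/-- The determinant `D(l,m,n)` defining the structure constants of the simple
3-Lie algebra `A_ω`. -/
noncomputable def Dw (F : Type*) [Field F] (l m n : ℤ) : F :=
  (-1 : F) ^ l * ((n : F) - (m : F)) - (-1 : F) ^ m * ((n : F) - (l : F)) +
    (-1 : F) ^ n * ((m : F) - (l : F))

/-- The unique `F`-trilinear bracket on `A_ω = ℤ →₀ F` with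
`[L_l, L_m, L_n] = D(l,m,n) • L_{l+m+n-1}` on basis vectors. -/
noncomputable def tripleBracket (F : Type*) [Field F] (x y z : ℤ →₀ F) : ℤ →₀ F :=
  x.sum fun l a => y.sum fun m b => z.sum fun n c =>
    Finsupp.single (l + m + n - 1) (a * b * c * Dw F l m n)

/-- The "odd" homogeneous Rota–Baxter equation. -/
def OddRB {F : Type*} [Field F] (f : ℤ → F) : Prop :=
  ∀ l m n : ℤ, l ≠ m →
    f (2*l+1) * f (2*m+1) * f (2*n) =
      (f (2*l+1) * f (2*m+1) + f (2*l+1) * f (2*n) + f (2*m+1) * f (2*n) +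
        f (2*l+1) + f (2*m+1) + f (2*n) + 1) * f (2*l+2*m+2*n+1)

/-- The "even" homogeneous Rota–Baxter equation. -/
def EvenRB {F : Type*} [Field F] (f : ℤ → F) : Prop :=
  ∀ l m n : ℤ, m ≠ n →
    f (2*l+1) * f (2*m) * f (2*n) =
      (f (2*l+1) * f (2*m) + f (2*l+1) * f (2*n) + f (2*m) * f (2*n) +
        f (2*l+1) + f (2*m) + f (2*n) + 1) * f (2*l+2*m+2*n)


/-!
Both sides of the weight-one Rota–Baxter identity are trilinear, so it suffices to check it on
basis vectors. With `S = 1 + R` the identity reads `S [Rx, Ry, Rz] = R [Sx, Sy, Sz]`, and for `R`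
diagonal with eigenvalues `f` it becomes, on `L_l, L_m, L_n` and with `k = l + m + n - 1`,
`D(l,m,n) · ((1 + f k) f l f m f n - f k (1 + f l)(1 + f m)(1 + f n)) = 0`.
Here `D` is alternating and the second factor symmetric in `l, m, n`; `D` vanishes when `l, m, n`
have the same parity and is otherwise `±4` times a difference of half-indices. Up to permutation
only the parity patterns (odd, odd, even) and (odd, even, even) remain, and they give the two
homogeneous equations.
-/

open Finsupp

section
variable {F : Type*} [Field F]

theorem Finsupp.trilinear_ext_iff {α β γ M : Type*} [AddCommMonoid M] [Module F M]
    {Φ Ψ : (α →₀ F) →ₗ[F] (β →₀ F) →ₗ[F] (γ →₀ F) →ₗ[F] M} :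
    Φ = Ψ ↔ ∀ a b c, Φ (single a 1) (single b 1) (single c 1) =
      Ψ (single a 1) (single b 1) (single c 1) := by
  refine ⟨fun h => by simp [h], fun h => ?_⟩
  ext a b c
  exact h a b c

theorem Finsupp.apply_single_of_diagonal {ι : Type*} {g : (ι →₀ F) →ₗ[F] (ι →₀ F)} {d : ι → F}
    (hg : ∀ k, g (single k 1) = d k • single k 1) (k : ι) (c : F) :
    g (single k c) = single k (d k * c) := by
  rw [← smul_single_one, map_smul, hg, smul_smul, smul_single_one, mul_comm]

noncomputable def tripleBracketₗ : (ℤ →₀ F) →ₗ[F] (ℤ →₀ F) →ₗ[F] (ℤ →₀ F) →ₗ[F] (ℤ →₀ F) :=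
  lsum F fun l => LinearMap.toSpanSingleton F _ <|
    lsum F fun m => LinearMap.toSpanSingleton F _ <|
      lsum F fun n => LinearMap.toSpanSingleton F _ <| single (l + m + n - 1) (Dw F l m n)

theorem tripleBracketₗ_apply (x y z : ℤ →₀ F) :
    tripleBracketₗ x y z = tripleBracket F x y z := by
  simp only [tripleBracketₗ, tripleBracket, lsum_apply, Finsupp.sum, LinearMap.sum_apply,
    LinearMap.smul_apply, LinearMap.toSpanSingleton_apply, Finset.smul_sum, smul_single,
    smul_eq_mul, mul_assoc]

theorem tripleBracket_single (l m n : ℤ) (a b c : F) :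
    tripleBracket F (single l a) (single m b) (single n c) =
      single (l + m + n - 1) (a * b * c * Dw F l m n) := by
  simp [tripleBracket]

noncomputable def tripleBracketComp (g : (ℤ →₀ F) →ₗ[F] (ℤ →₀ F)) :
    (ℤ →₀ F) →ₗ[F] (ℤ →₀ F) →ₗ[F] (ℤ →₀ F) →ₗ[F] (ℤ →₀ F) :=
  (tripleBracketₗ.compl₁₂ g g).compr₂ (LinearMap.lcomp F _ g)

theorem tripleBracketComp_apply (g : (ℤ →₀ F) →ₗ[F] (ℤ →₀ F)) (x y z : ℤ →₀ F) :
    tripleBracketComp g x y z = tripleBracket F (g x) (g y) (g z) := by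
  simp [tripleBracketComp, tripleBracketₗ_apply]

def IsRotaBaxter (R : (ℤ →₀ F) →ₗ[F] (ℤ →₀ F)) : Prop :=
  ∀ x₁ x₂ x₃ : ℤ →₀ F,
    tripleBracket F (R x₁) (R x₂) (R x₃) =
      R (tripleBracket F (R x₁) (R x₂) x₃ + tripleBracket F (R x₁) x₂ (R x₃) +
          tripleBracket F x₁ (R x₂) (R x₃) + tripleBracket F (R x₁) x₂ x₃ +
          tripleBracket F x₁ (R x₂) x₃ + tripleBracket F x₁ x₂ (R x₃) +
          tripleBracket F x₁ x₂ x₃)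

theorem isRotaBaxter_iff (R : (ℤ →₀ F) →ₗ[F] (ℤ →₀ F)) :
    IsRotaBaxter R ↔ (tripleBracketComp R).compr₂ (LinearMap.llcomp F _ _ _ (1 + R)) =
      (tripleBracketComp (1 + R)).compr₂ (LinearMap.llcomp F _ _ _ R) := by
  simp only [IsRotaBaxter, LinearMap.ext_iff, LinearMap.compr₂_apply, LinearMap.llcomp_apply,
    tripleBracketComp_apply, LinearMap.add_apply, Module.End.one_apply]
  simp only [← tripleBracketₗ_apply, map_add, LinearMap.add_apply]
  refine forall₃_congr fun x y z => ?_
  rw [← add_left_inj (R (tripleBracketₗ (R x) (R y) (R z)))]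
  constructor <;> intro h <;> rw [h] <;> abel

theorem tripleBracketComp_single_of_diagonal {g : (ℤ →₀ F) →ₗ[F] (ℤ →₀ F)} {d : ℤ → F}
    (hg : ∀ k, g (single k 1) = d k • single k 1) (l m n : ℤ) :
    tripleBracketComp g (single l 1) (single m 1) (single n 1) =
      single (l + m + n - 1) (d l * d m * d n * Dw F l m n) := by
  simp only [tripleBracketComp_apply, apply_single_of_diagonal hg, mul_one, tripleBracket_single]

def homogeneousDefect (f : ℤ → F) (l m n : ℤ) : F :=
  (1 + f (l + m + n - 1)) * (f l * f m * f n) -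
    f (l + m + n - 1) * ((1 + f l) * (1 + f m) * (1 + f n))

theorem isRotaBaxter_iff_of_diagonal {R : (ℤ →₀ F) →ₗ[F] (ℤ →₀ F)} {f : ℤ → F}
    (hR : ∀ k, R (single k 1) = f k • single k 1) :
    IsRotaBaxter R ↔ ∀ l m n, Dw F l m n * homogeneousDefect f l m n = 0 := by
  have hS : ∀ k, (1 + R) (single k 1) = (1 + f k) • single k 1 := by simp [hR, add_smul]
  rw [isRotaBaxter_iff, Finsupp.trilinear_ext_iff]
  refine forall₃_congr fun l m n => ?_
  simp only [LinearMap.compr₂_apply, LinearMap.llcomp_apply,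
    tripleBracketComp_single_of_diagonal hR, tripleBracketComp_single_of_diagonal hS,
    apply_single_of_diagonal hR, apply_single_of_diagonal hS, (single_injective _).eq_iff]
  rw [← sub_eq_zero]
  congr! 1
  unfold homogeneousDefect
  ring

theorem Dw_swap₁₂ (l m n : ℤ) : Dw F m l n = -Dw F l m n := by unfold Dw; ring

theorem Dw_swap₂₃ (l m n : ℤ) : Dw F l n m = -Dw F l m n := by unfold Dw; ring

theorem Dw_odd_odd_odd (a b c : ℤ) : Dw F (2 * a + 1) (2 * b + 1) (2 * c + 1) = 0 := by
  simp only [Dw, (odd_two_mul_add_one _).neg_one_zpow]; ring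

theorem Dw_even_even_even (a b c : ℤ) : Dw F (2 * a) (2 * b) (2 * c) = 0 := by
  simp only [Dw, (even_two_mul _).neg_one_zpow]; ring

theorem Dw_odd_odd_even (a b c : ℤ) : Dw F (2 * a + 1) (2 * b + 1) (2 * c) = 4 * (b - a) := by
  simp only [Dw, (odd_two_mul_add_one _).neg_one_zpow, (even_two_mul _).neg_one_zpow]
  push_cast
  ring

theorem Dw_odd_even_even (a b c : ℤ) : Dw F (2 * a + 1) (2 * b) (2 * c) = 4 * (b - c) := by
  simp only [Dw, (odd_two_mul_add_one _).neg_one_zpow, (even_two_mul _).neg_one_zpow]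
  push_cast
  ring

theorem homogeneousDefect_swap₁₂ (f : ℤ → F) (l m n : ℤ) :
    homogeneousDefect f m l n = homogeneousDefect f l m n := by
  unfold homogeneousDefect; rw [add_comm m l]; ring

theorem homogeneousDefect_swap₂₃ (f : ℤ → F) (l m n : ℤ) :
    homogeneousDefect f l n m = homogeneousDefect f l m n := by
  unfold homogeneousDefect; rw [add_right_comm l n m]; ring

theorem Dw_mul_homogeneousDefect_swap₁₂ (f : ℤ → F) (l m n : ℤ) :
    Dw F m l n * homogeneousDefect f m l n = -(Dw F l m n * homogeneousDefect f l m n) := by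
  rw [Dw_swap₁₂, homogeneousDefect_swap₁₂, neg_mul]

theorem Dw_mul_homogeneousDefect_swap₂₃ (f : ℤ → F) (l m n : ℤ) :
    Dw F l n m * homogeneousDefect f l n m = -(Dw F l m n * homogeneousDefect f l m n) := by
  rw [Dw_swap₂₃, homogeneousDefect_swap₂₃, neg_mul]

theorem forall_Dw_mul_homogeneousDefect_eq_zero_iff (f : ℤ → F) :
    (∀ l m n, Dw F l m n * homogeneousDefect f l m n = 0) ↔
      (∀ l m n, Dw F (2 * l + 1) (2 * m + 1) (2 * n) *
        homogeneousDefect f (2 * l + 1) (2 * m + 1) (2 * n) = 0) ∧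
      (∀ l m n, Dw F (2 * l + 1) (2 * m) (2 * n) *
        homogeneousDefect f (2 * l + 1) (2 * m) (2 * n) = 0) := by
  refine ⟨fun h => ⟨fun l m n => h _ _ _, fun l m n => h _ _ _⟩, fun ⟨hooe, hoee⟩ l m n => ?_⟩
  obtain ⟨a, rfl | rfl⟩ := Int.even_or_odd' l <;> obtain ⟨b, rfl | rfl⟩ := Int.even_or_odd' m <;>
    obtain ⟨c, rfl | rfl⟩ := Int.even_or_odd' n
  · rw [Dw_even_even_even, zero_mul]
  · rw [Dw_mul_homogeneousDefect_swap₂₃, Dw_mul_homogeneousDefect_swap₁₂, neg_neg]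
    exact hoee c a b
  · rw [Dw_mul_homogeneousDefect_swap₁₂, neg_eq_zero]
    exact hoee b a c
  · rw [Dw_mul_homogeneousDefect_swap₁₂, Dw_mul_homogeneousDefect_swap₂₃, neg_neg]
    exact hooe b c a
  · exact hoee a b c
  · rw [Dw_mul_homogeneousDefect_swap₂₃, neg_eq_zero]
    exact hooe a c b
  · exact hooe a b c
  · rw [Dw_odd_odd_odd, zero_mul]

theorem homogeneousDefect_eq_zero_iff (f : ℤ → F) (l m n : ℤ) :
    homogeneousDefect f l m n = 0 ↔ f l * f m * f n =
      (f l * f m + f l * f n + f m * f n + f l + f m + f n + 1) * f (l + m + n - 1) := by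
  rw [homogeneousDefect, sub_eq_zero]
  constructor <;> intro h <;> linear_combination h

theorem four_mul_intCast_sub_eq_zero_iff [CharZero F] (a b : ℤ) :
    (4 : F) * (a - b) = 0 ↔ a = b := by
  simp [sub_eq_zero]

theorem oddRB_iff [CharZero F] (f : ℤ → F) :
    OddRB f ↔ ∀ l m n, Dw F (2 * l + 1) (2 * m + 1) (2 * n) *
      homogeneousDefect f (2 * l + 1) (2 * m + 1) (2 * n) = 0 := by
  refine forall₃_congr fun l m n => ?_
  have hk : 2 * l + 1 + (2 * m + 1) + 2 * n - 1 = 2 * l + 2 * m + 2 * n + 1 := by ring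
  rw [Dw_odd_odd_even, mul_eq_zero, four_mul_intCast_sub_eq_zero_iff,
    homogeneousDefect_eq_zero_iff, hk, or_iff_not_imp_left, ← ne_eq, ne_comm]

theorem evenRB_iff [CharZero F] (f : ℤ → F) :
    EvenRB f ↔ ∀ l m n, Dw F (2 * l + 1) (2 * m) (2 * n) *
      homogeneousDefect f (2 * l + 1) (2 * m) (2 * n) = 0 := by
  refine forall₃_congr fun l m n => ?_
  have hk : 2 * l + 1 + 2 * m + 2 * n - 1 = 2 * l + 2 * m + 2 * n := by ring
  rw [Dw_odd_even_even, mul_eq_zero, four_mul_intCast_sub_eq_zero_iff,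
    homogeneousDefect_eq_zero_iff, hk, or_iff_not_imp_left, ← ne_eq]

end

theorem statement1 (F : Type*) [Field F] [CharZero F]
    (f : ℤ → F) (R : (ℤ →₀ F) →ₗ[F] (ℤ →₀ F))
    (hR : ∀ m : ℤ, R (Finsupp.single m 1) = f m • Finsupp.single m (1 : F)) :
    (∀ x₁ x₂ x₃ : ℤ →₀ F,
        tripleBracket F (R x₁) (R x₂) (R x₃) =
          R (tripleBracket F (R x₁) (R x₂) x₃ + tripleBracket F (R x₁) x₂ (R x₃) +
              tripleBracket F x₁ (R x₂) (R x₃) + tripleBracket F (R x₁) x₂ x₃ +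
              tripleBracket F x₁ (R x₂) x₃ + tripleBracket F x₁ x₂ (R x₃) +
              tripleBracket F x₁ x₂ x₃)) ↔
      (OddRB f ∧ EvenRB f) :=
  (isRotaBaxter_iff_of_diagonal hR).trans <|
    (forall_Dw_mul_homogeneousDefect_eq_zero_iff f).trans <|
      (oddRB_iff f).symm.and (evenRB_iff f).symm
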